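/- arXiv:2212.07368 — 4 statements merged into one kernel-verified Lean document; each statement's English description precedes it below -/
import Mathlib

section
/- Let E ∈ C^{N×K} be generic and Q a binary diagonal N × N matrix with r nonzero entries. If K ≤ max{r, N − r}, then the relation [[Q, I−Q],[I−Q, Q]] · diag(E,E) · (β₁'', β₂'') = diag(E,E) · (β₁', β₂') implies either (β₁' = β₁'' and β₂' = β₂'') or (β₁' = β₂'' and β₂' = β₁''). -/
/-!
On the rows where `q = 1` the relation reads `E β₁'' = E β₁'` and `E β₂'' = E β₂'`; on the rows
where `q = 0` the two channels are exchanged. One of these two row sets has at least `K`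
elements, and a generic `E` is injective already on any `K` of its rows.
-/

open Matrix

/-- A tall N×K matrix is generic if every K×K row-submatrix is invertible. -/
def IsGeneric (N K : ℕ) (E : Matrix (Fin N) (Fin K) ℂ) : Prop :=
  ∀ f : Fin K → Fin N, Function.Injective f → IsUnit (E.submatrix f id).det

theorem IsGeneric.eq_of_mulVec_apply_eq {N K : ℕ} {E : Matrix (Fin N) (Fin K) ℂ}
    (hE : IsGeneric N K E) {S : Finset (Fin N)} (hS : K ≤ S.card) {x y : Fin K → ℂ}
    (h : ∀ i ∈ S, (E *ᵥ x) i = (E *ᵥ y) i) : x = y := by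
  obtain ⟨T, hTS, hT⟩ := Finset.exists_subset_card_eq hS
  let f := T.orderEmbOfFin hT
  have hunit : IsUnit (E.submatrix f id) :=
    (isUnit_iff_isUnit_det _).mpr (hE f f.injective)
  refine mulVec_injective_iff_isUnit.mpr hunit (funext fun j => ?_)
  exact h (f j) (hTS (T.orderEmbOfFin_mem hT j))

theorem diagonal_mulVec_add_one_sub_diagonal_mulVec_apply {n R : Type*} [Fintype n]
    [DecidableEq n] [CommRing R] (q u v : n → R) (i : n) :
    (diagonal q *ᵥ u + (1 - diagonal q) *ᵥ v : n → R) i = q i * u i + (1 - q i) * v i := by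
  simp only [Pi.add_apply, sub_mulVec, one_mulVec, Pi.sub_apply, mulVec_diagonal]
  ring

/-- two-channel uniqueness. With E generic, Q binary diagonal with
r nonzero entries, and K ≤ max(r, N−r), the relation
[[Q, I−Q],[I−Q, Q]] diag(E,E) β'' = diag(E,E) β' forces the two channel
solutions to agree up to a swap. -/
theorem stmt6 (N K : ℕ) (E : Matrix (Fin N) (Fin K) ℂ) (hE : IsGeneric N K E)
    (q : Fin N → ℂ) (hbin : ∀ i, q i = 0 ∨ q i = 1)
    (hK : K ≤ max ((Finset.univ.filter fun i => q i ≠ 0).card)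
                  (N - (Finset.univ.filter fun i => q i ≠ 0).card))
    (β₁' β₂' β₁'' β₂'' : Fin K → ℂ)
    (h1 : Matrix.diagonal q *ᵥ (E *ᵥ β₁'') + (1 - Matrix.diagonal q) *ᵥ (E *ᵥ β₂'')
            = E *ᵥ β₁')
    (h2 : (1 - Matrix.diagonal q) *ᵥ (E *ᵥ β₁'') + Matrix.diagonal q *ᵥ (E *ᵥ β₂'')
            = E *ᵥ β₂') :
    (β₁' = β₁'' ∧ β₂' = β₂'') ∨ (β₁' = β₂'' ∧ β₂' = β₁'') := by
  set S := Finset.univ.filter fun i => q i ≠ 0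
  rw [add_comm] at h2
  have hβ₁ (i) : (E *ᵥ β₁') i = q i * (E *ᵥ β₁'') i + (1 - q i) * (E *ᵥ β₂'') i :=
    (congrFun h1 i).symm.trans (diagonal_mulVec_add_one_sub_diagonal_mulVec_apply ..)
  have hβ₂ (i) : (E *ᵥ β₂') i = q i * (E *ᵥ β₂'') i + (1 - q i) * (E *ᵥ β₁'') i :=
    (congrFun h2 i).symm.trans (diagonal_mulVec_add_one_sub_diagonal_mulVec_apply ..)
  rcases le_max_iff.mp hK with hS | hSc
  · have hq : ∀ i ∈ S, q i = 1 := fun i hi =>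
      (hbin i).resolve_left (Finset.mem_filter.mp hi).2
    exact .inl ⟨hE.eq_of_mulVec_apply_eq hS fun i hi => by simp [hβ₁, hq i hi],
      hE.eq_of_mulVec_apply_eq hS fun i hi => by simp [hβ₂, hq i hi]⟩
  · have hSc' : K ≤ Sᶜ.card := by rwa [Finset.card_compl, Fintype.card_fin]
    have hq : ∀ i ∈ Sᶜ, q i = 0 := fun i hi => by simpa [S] using hi
    exact .inr ⟨hE.eq_of_mulVec_apply_eq hSc' fun i hi => by simp [hβ₁, hq i hi],
      hE.eq_of_mulVec_apply_eq hSc' fun i hi => by simp [hβ₂, hq i hi]⟩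
end

section
/- Let E ∈ C^{N×K} and Q a binary diagonal N × N matrix with r nonzero entries. If K > max{r, N − r} and the column space 𝓔 of E intersects both ker(ϱ) and ker(ϱ^⊥) nontrivially (where ϱ is multiplication by Q and ϱ^⊥ by I − Q), then there exist vectors x₁', x₂', x₁'', x₂'' in 𝓔 with x₁' = Q x₁'' + (I−Q) x₂'' and x₂' = (I−Q) x₁'' + Q x₂'', but x₁' ≠ x₁'' and x₁' ≠ x₂''. -/
open Matrix

/-!
If `u ≠ 0` lies in `𝓔 ∩ ker ϱ` and `v ≠ 0` in `𝓔 ∩ ker ϱ^⊥`, then `x₁'' = u`, `x₂'' = v` are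
shuffled by `ϱ, ϱ^⊥` into `x₁' = ϱ u + ϱ^⊥ v = 0` and `x₂' = ϱ^⊥ u + ϱ v = u + v`, both in `𝓔`,
and `x₁' = 0` differs from both `u` and `v`.
-/

theorem exists_shuffle_ne_of_mem_ker {M : Type*} [AddMonoid M] (S : AddSubmonoid M)
    (ϱ ϱc : M → M) (hcompl : ∀ x, ϱ x + ϱc x = x) {u v : M} (hu : u ∈ S) (hv : v ∈ S)
    (hu0 : u ≠ 0) (hv0 : v ≠ 0) (hϱu : ϱ u = 0) (hϱcv : ϱc v = 0) :
    ∃ x₁' x₂' x₁'' x₂'' : M, x₁' ∈ S ∧ x₂' ∈ S ∧ x₁'' ∈ S ∧ x₂'' ∈ S ∧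
      x₁' = ϱ x₁'' + ϱc x₂'' ∧ x₂' = ϱc x₁'' + ϱ x₂'' ∧ x₁' ≠ x₁'' ∧ x₁' ≠ x₂'' := by
  have hϱcu : ϱc u = u := by simpa [hϱu] using hcompl u
  have hϱv : ϱ v = v := by simpa [hϱcv] using hcompl v
  refine ⟨0, u + v, u, v, S.zero_mem, S.add_mem hu hv, hu, hv, ?_, ?_, hu0.symm, hv0.symm⟩
  · rw [hϱu, hϱcv, add_zero]
  · rw [hϱcu, hϱv]

theorem Matrix.mulVec_add_one_sub_mulVec {n R : Type*} [Fintype n] [DecidableEq n] [Ring R]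
    (A : Matrix n n R) (x : n → R) : A *ᵥ x + (1 - A) *ᵥ x = x := by
  rw [sub_mulVec, one_mulVec, add_sub_cancel]

theorem stmt7_general (N K : ℕ) (E : Matrix (Fin N) (Fin K) ℂ)
    (q : Fin N → ℂ)
    (h1 : ∃ x ∈ LinearMap.range (Matrix.toLin' E),
            x ≠ 0 ∧ Matrix.diagonal q *ᵥ x = 0)
    (h2 : ∃ x ∈ LinearMap.range (Matrix.toLin' E),
            x ≠ 0 ∧ (1 - Matrix.diagonal q) *ᵥ x = 0) :
    ∃ x₁' x₂' x₁'' x₂'' : Fin N → ℂ,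
      x₁' ∈ LinearMap.range (Matrix.toLin' E) ∧
      x₂' ∈ LinearMap.range (Matrix.toLin' E) ∧
      x₁'' ∈ LinearMap.range (Matrix.toLin' E) ∧
      x₂'' ∈ LinearMap.range (Matrix.toLin' E) ∧
      x₁' = Matrix.diagonal q *ᵥ x₁'' + (1 - Matrix.diagonal q) *ᵥ x₂'' ∧
      x₂' = (1 - Matrix.diagonal q) *ᵥ x₁'' + Matrix.diagonal q *ᵥ x₂'' ∧
      x₁' ≠ x₁'' ∧ x₁' ≠ x₂'' := by
  obtain ⟨u, hu, hu0, hϱu⟩ := h1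
  obtain ⟨v, hv, hv0, hϱcv⟩ := h2
  exact exists_shuffle_ne_of_mem_ker (LinearMap.range (Matrix.toLin' E)).toAddSubmonoid
    (diagonal q *ᵥ ·) ((1 - diagonal q) *ᵥ ·) (mulVec_add_one_sub_mulVec _) hu hv hu0 hv0
    hϱu hϱcv

/-- when K > max(r, N−r) and the column space 𝓔 of E intersects
both ker(ϱ) and ker(ϱ^⊥) nontrivially, there are vectors in 𝓔 satisfying the
two-channel shuffling relations that do not agree: non-uniqueness. -/
theorem stmt7 (N K : ℕ) (E : Matrix (Fin N) (Fin K) ℂ)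
    (q : Fin N → ℂ) (hbin : ∀ i, q i = 0 ∨ q i = 1)
    (hK : K > max ((Finset.univ.filter fun i => q i ≠ 0).card)
                  (N - (Finset.univ.filter fun i => q i ≠ 0).card))
    (h1 : ∃ x ∈ LinearMap.range (Matrix.toLin' E),
            x ≠ 0 ∧ Matrix.diagonal q *ᵥ x = 0)
    (h2 : ∃ x ∈ LinearMap.range (Matrix.toLin' E),
            x ≠ 0 ∧ (1 - Matrix.diagonal q) *ᵥ x = 0) :
    ∃ x₁' x₂' x₁'' x₂'' : Fin N → ℂ,
      x₁' ∈ LinearMap.range (Matrix.toLin' E) ∧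
      x₂' ∈ LinearMap.range (Matrix.toLin' E) ∧
      x₁'' ∈ LinearMap.range (Matrix.toLin' E) ∧
      x₂'' ∈ LinearMap.range (Matrix.toLin' E) ∧
      x₁' = Matrix.diagonal q *ᵥ x₁'' + (1 - Matrix.diagonal q) *ᵥ x₂'' ∧
      x₂' = (1 - Matrix.diagonal q) *ᵥ x₁'' + Matrix.diagonal q *ᵥ x₂'' ∧
      x₁' ≠ x₁'' ∧ x₁' ≠ x₂'' :=
  stmt7_general N K E q h1 h2
end

section
/- Let E ∈ C^{N×K} be generic with column space 𝓔, M ≥ 2, N ≥ M K, and let {Q_{mn}}_{m,n=1}^M be binary diagonal N × N matrices with ∑_{m=1}^M Q_{mn} = I and ∑_{n=1}^M Q_{mn} = I. Let x_m' = E β_m' and x_m'' = E β_m'' with all β_m' distinct. If x_m' = ∑_{n=1}^M Q_{mn} x_n'' for every m, then there exists a permutation σ of {1,…,M} such that x_m' = x_{σ(m)}'' for all m. -/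
/-!
Since each row of the block matrix `(Q_{mn})` sums to `I` and the blocks are binary diagonal,
every sample of `x_m'` is a sample of some `x_n''`. As `N ≥ MK`, by pigeonhole one `n` supplies
at least `K` samples of `x_m'`; genericity of `E` then forces `β_m' = β_n''`. The resulting map
`m ↦ n` is injective because the `β_m'` are distinct, hence a permutation.
-/

open Matrix

lemma exists_eq_pi_single_of_sum_eq_one {ι R : Type*} [Fintype ι] [DecidableEq ι]
    [Semiring R] [CharZero R] {q : ι → R} (hbin : ∀ i, q i = 0 ∨ q i = 1)
    (hsum : ∑ i, q i = 1) : ∃ i₀, q = Pi.single i₀ 1 := by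
  classical
  have hq : q = fun i => if q i = 1 then 1 else 0 := by
    funext i; rcases hbin i with h | h <;> simp [h]
  rw [hq, Finset.sum_boole] at hsum
  obtain ⟨i₀, hi₀⟩ := Finset.card_eq_one.mp (by exact_mod_cast hsum)
  refine ⟨i₀, funext fun i => ?_⟩
  have hmem := Finset.ext_iff.mp hi₀ i
  simp only [Finset.mem_filter, Finset.mem_univ, true_and, Finset.mem_singleton] at hmem
  by_cases hi : i = i₀
  · subst hi; simpa using hmem
  · rw [Pi.single_eq_of_ne hi]
    exact (hbin i).resolve_right (mt hmem.mp hi)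

lemma exists_sum_diagonal_mulVec_apply_eq {ι n R : Type*} [Fintype ι] [Fintype n] [DecidableEq n]
    [Semiring R] [CharZero R] {q : ι → n → R} (hbin : ∀ i p, q i p = 0 ∨ q i p = 1)
    (hsum : ∑ i, diagonal (q i) = 1) (x : ι → n → R) (p : n) :
    ∃ i, (∑ j, diagonal (q j) *ᵥ x j) p = x i p := by
  classical
  have hsum_p : ∑ i, q i p = 1 := by
    simpa [Matrix.sum_apply] using congrFun (congrFun hsum p) p
  obtain ⟨i₀, hi₀⟩ := exists_eq_pi_single_of_sum_eq_one (fun i => hbin i p) hsum_p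
  refine ⟨i₀, ?_⟩
  simp [Finset.sum_apply, mulVec_diagonal, congrFun hi₀, Pi.single_apply]

lemma IsGeneric.eq_of_mulVec_eq_on {N K : ℕ} {E : Matrix (Fin N) (Fin K) ℂ} (hE : IsGeneric N K E)
    {s : Finset (Fin N)} (hs : K ≤ s.card) {u v : Fin K → ℂ}
    (huv : ∀ p ∈ s, (E *ᵥ u) p = (E *ᵥ v) p) : u = v := by
  obtain ⟨t, hts, htc⟩ := Finset.exists_subset_card_eq hs
  let f : Fin K ↪o Fin N := t.orderEmbOfFin htc
  have hinj : Function.Injective (E.submatrix f id).mulVec :=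
    mulVec_injective_iff_isUnit.mpr ((isUnit_iff_isUnit_det _).mpr (hE f f.injective))
  refine hinj (funext fun i => ?_)
  simpa [mulVec, dotProduct] using huv (f i) (hts (t.orderEmbOfFin_mem htc i))

lemma IsGeneric.exists_eq_of_forall_exists_mulVec_apply_eq {N K M : ℕ} (hN : M * K ≤ N)
    {E : Matrix (Fin N) (Fin K) ℂ} (hE : IsGeneric N K E) [Nonempty (Fin M)]
    {u : Fin K → ℂ} {v : Fin M → Fin K → ℂ}
    (huv : ∀ p, ∃ n, (E *ᵥ u) p = (E *ᵥ v n) p) : ∃ n, u = v n := by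
  choose g hg using huv
  obtain ⟨n, hn⟩ := Fintype.exists_le_card_fiber_of_mul_le_card g
    (by simpa only [Fintype.card_fin] using hN)
  exact ⟨n, hE.eq_of_mulVec_eq_on hn fun p hp => (Finset.mem_filter.mp hp).2 ▸ hg p⟩

theorem stmt9_general (N K M : ℕ) (hN : M * K ≤ N)
    (E : Matrix (Fin N) (Fin K) ℂ) (hE : IsGeneric N K E)
    (q : Fin M → Fin M → Fin N → ℂ)
    (hbin : ∀ m n p, q m n p = 0 ∨ q m n p = 1)
    (hrow : ∀ m, ∑ n, Matrix.diagonal (q m n) = (1 : Matrix (Fin N) (Fin N) ℂ))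
    (β' β'' : Fin M → Fin K → ℂ)
    (hdist : ∀ κ lam, κ ≠ lam → β' κ ≠ β' lam)
    (hrel : ∀ m, E *ᵥ β' m = ∑ n, Matrix.diagonal (q m n) *ᵥ (E *ᵥ β'' n)) :
    ∃ σ : Equiv.Perm (Fin M), ∀ m, E *ᵥ β' m = E *ᵥ β'' (σ m) := by
  have hmatch : ∀ m, ∃ n, β' m = β'' n := fun m =>
    have : Nonempty (Fin M) := ⟨m⟩
    hE.exists_eq_of_forall_exists_mulVec_apply_eq hN fun p => by
      rw [hrel m]
      exact exists_sum_diagonal_mulVec_apply_eq (hbin m) (hrow m) (fun n => E *ᵥ β'' n) p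
  choose σ hσ using hmatch
  have hσ_inj : σ.Injective := fun m₁ m₂ h =>
    by_contra fun hne => hdist m₁ m₂ hne (by rw [hσ m₁, hσ m₂, h])
  exact ⟨Equiv.ofBijective σ (Finite.injective_iff_bijective.mp hσ_inj), fun m => by
    rw [Equiv.ofBijective_apply, hσ m]⟩

/-- cross-channel unlabeled sensing. Under a generic E, N ≥ MK,
and structured binary diagonal blocks, any two explanations of the shuffled
data agree up to a renaming of the channels. -/
theorem stmt9 (N K M : ℕ) (hM : 2 ≤ M) (hN : M * K ≤ N)
    (E : Matrix (Fin N) (Fin K) ℂ) (hE : IsGeneric N K E)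
    (q : Fin M → Fin M → Fin N → ℂ)
    (hbin : ∀ m n p, q m n p = 0 ∨ q m n p = 1)
    (hcol : ∀ n, ∑ m, Matrix.diagonal (q m n) = (1 : Matrix (Fin N) (Fin N) ℂ))
    (hrow : ∀ m, ∑ n, Matrix.diagonal (q m n) = (1 : Matrix (Fin N) (Fin N) ℂ))
    (β' β'' : Fin M → Fin K → ℂ)
    (hdist : ∀ κ lam, κ ≠ lam → β' κ ≠ β' lam)
    (hrel : ∀ m, E *ᵥ β' m = ∑ n, Matrix.diagonal (q m n) *ᵥ (E *ᵥ β'' n)) :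
    ∃ σ : Equiv.Perm (Fin M), ∀ m, E *ᵥ β' m = E *ᵥ β'' (σ m) :=
  stmt9_general N K M hN E hE q hbin hrow β' β'' hdist hrel
end

section
/- Let W be the N × N matrix with entries W_{ip} = ω^{ip}, ω = exp(2πj/N), and let V be an N × K Vandermonde matrix with entries V_{pk} = v_k^p, where the v_k ∈ C are pairwise distinct and v_k^N ≠ ±1 for all k, and K ≤ N. Then every K × K submatrix of W V obtained by selecting K rows is invertible; i.e., W V is a generic matrix. -/
/-!
Each entry of a row of `W V` is a geometric sum: with `u = ω ^ ℓ` a root of unity,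
`∑_{p < N} (u v)^p = u⁻¹ (1 - v^N) / (u⁻¹ - v)`. So the row-submatrix is
`diag(u_i⁻¹) · C · diag(1 - v_k^N)` with `C` the Cauchy matrix `1 / (u_i⁻¹ - v_k)`.
The nodes `u_i⁻¹` are distinct because `ω` is a primitive `N`-th root of unity, and they avoid
the `v_k` because `v_k^N ≠ 1`. A Cauchy matrix `1 / (x_i - y_j)` with distinct `x_i` and distinct
`y_j` is invertible: a kernel vector `c` yields the Lagrange interpolant through the points
`(y_j, c_j / w_j)` (with `w_j` the nodal weights), a polynomial of degree `< n` which, by the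
barycentric formula, vanishes at the `n` points `x_i`; hence it is zero and so is `c`.
-/

open Matrix Complex

open Polynomial Finset

namespace Matrix

variable {m n K : Type*} [Field K]

def cauchy (x : m → K) (y : n → K) : Matrix m n K :=
  of fun i j => (x i - y j)⁻¹

variable [Fintype n] [DecidableEq n] {x y : n → K}

theorem cauchy_mulVec_eq_zero_iff (hx : Function.Injective x) (hy : Function.Injective y)
    (hxy : ∀ i j, x i ≠ y j) {c : n → K} : cauchy x y *ᵥ c = 0 ↔ c = 0 := by
  refine ⟨fun hc => ?_, fun hc => by rw [hc, mulVec_zero]⟩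
  set r : n → K := fun j => c j / Lagrange.nodalWeight univ y j
  have hP : Lagrange.interpolate univ y r = 0 := by
    refine Polynomial.eq_zero_of_degree_lt_of_eval_index_eq_zero univ hx.injOn
      (Lagrange.degree_interpolate_lt _ hy.injOn) fun i _ => ?_
    have hci : ∑ j, (x i - y j)⁻¹ * c j = 0 := congrFun hc i
    have hw : ∑ j, Lagrange.nodalWeight univ y j * (x i - y j)⁻¹ * r j =
        ∑ j, (x i - y j)⁻¹ * c j := sum_congr rfl fun j _ => by
      simp only [r]
      field_simp [Lagrange.nodalWeight_ne_zero hy.injOn (mem_univ j)]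
    rw [Lagrange.eval_interpolate_not_at_node _ fun j _ => hxy i j, hw, hci, mul_zero]
  funext j
  have hrj : r j = 0 := by
    rw [← Lagrange.eval_interpolate_at_node r hy.injOn (mem_univ j), hP, eval_zero]
  simpa [r, Lagrange.nodalWeight_ne_zero hy.injOn (mem_univ j)] using hrj

theorem det_cauchy_ne_zero (hx : Function.Injective x) (hy : Function.Injective y)
    (hxy : ∀ i j, x i ≠ y j) : (cauchy x y).det ≠ 0 := fun h => by
  obtain ⟨c, hc, hCc⟩ := exists_mulVec_eq_zero_iff.2 h
  exact hc ((cauchy_mulVec_eq_zero_iff hx hy hxy).1 hCc)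

end Matrix

theorem geom_sum_mul_eq_of_pow_eq_one {K : Type*} [Field K] {N : ℕ} {u v : K} (hu0 : u ≠ 0)
    (hu : u ^ N = 1) (huv : u⁻¹ ≠ v) :
    ∑ p ∈ range N, (u * v) ^ p = u⁻¹ * (u⁻¹ - v)⁻¹ * (1 - v ^ N) := by
  have huv' : u * v ≠ 1 := fun h => huv (eq_inv_of_mul_eq_one_right h).symm
  have hden : u⁻¹ - v ≠ 0 := sub_ne_zero.2 huv
  rw [geom_sum_eq huv', mul_pow, hu, one_mul]
  field_simp
  ring

theorem Matrix.submatrix_pow_mul_pow_eq_diagonal_mul_cauchy {K m n : Type*} [Field K]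
    [Fintype m] [Fintype n] [DecidableEq m] [DecidableEq n] {N : ℕ} {ω : K} (hω0 : ω ≠ 0)
    (hω : ω ^ N = 1) (f : m → Fin N) (v : n → K) (hv : ∀ i k, (ω ^ (f i : ℕ))⁻¹ ≠ v k) :
    ((of fun i p : Fin N => ω ^ ((i : ℕ) * (p : ℕ))) *
        of fun (p : Fin N) k => v k ^ (p : ℕ)).submatrix f id =
      diagonal (fun i => (ω ^ (f i : ℕ))⁻¹) * cauchy (fun i => (ω ^ (f i : ℕ))⁻¹) v *
        diagonal fun k => 1 - v k ^ N := by
  ext i k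
  have hu : (ω ^ (f i : ℕ)) ^ N = 1 := by rw [← pow_mul, mul_comm, pow_mul, hω, one_pow]
  rw [mul_diagonal, diagonal_mul, submatrix_apply, id, mul_apply, cauchy, of_apply,
    ← geom_sum_mul_eq_of_pow_eq_one (pow_ne_zero _ hω0) hu (hv i k), ← Fin.sum_univ_eq_sum_range]
  simp only [of_apply, mul_pow, pow_mul]

theorem stmt13_general (N K : ℕ) (v : Fin K → ℂ)
    (hdist : Function.Injective v)
    (hvN : ∀ k, (v k) ^ N ≠ 1 ∧ (v k) ^ N ≠ -1) :
    IsGeneric N K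
      ((Matrix.of fun i p : Fin N =>
          (Complex.exp (2 * Real.pi * Complex.I / N)) ^ ((i : ℕ) * (p : ℕ))) *
       (Matrix.of fun (p : Fin N) (k : Fin K) => (v k) ^ (p : ℕ))) := by
  intro f hf
  set ω : ℂ := Complex.exp (2 * Real.pi * Complex.I / N)
  have hω0 : ω ≠ 0 := Complex.exp_ne_zero _
  have hωN : ω ^ N = 1 := by
    rcases eq_or_ne N 0 with rfl | hN
    · exact pow_zero ω
    · exact (Complex.isPrimitiveRoot_exp N hN).pow_eq_one
  set x : Fin K → ℂ := fun i => (ω ^ (f i : ℕ))⁻¹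
  have hx : Function.Injective x := fun i j hij =>
    hf <| Fin.ext <| (Complex.isPrimitiveRoot_exp N (f i).pos.ne').pow_inj (f i).isLt (f j).isLt
      (inv_injective hij)
  have hxv (i k) : x i ≠ v k := fun h => (hvN k).1 <| by
    rw [← h, inv_pow, ← pow_mul, mul_comm, pow_mul, hωN, one_pow, inv_one]
  rw [submatrix_pow_mul_pow_eq_diagonal_mul_cauchy hω0 hωN f v hxv, isUnit_iff_ne_zero, det_mul,
    det_mul, det_diagonal, det_diagonal]
  refine mul_ne_zero (mul_ne_zero ?_ (det_cauchy_ne_zero hx hdist hxv)) ?_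
  · exact prod_ne_zero_iff.2 fun i _ => inv_ne_zero (pow_ne_zero _ hω0)
  · exact prod_ne_zero_iff.2 fun k _ => sub_ne_zero.2 (hvN k).1.symm

/-- W V is generic, where W is the N×N IDFT matrix
(W_{ip} = ω^{ip}, ω = exp(2πi/N)) and V the N×K Vandermonde matrix with
pairwise distinct nodes v_k satisfying v_k^N ≠ ±1. -/
theorem stmt13 (N K : ℕ) (hK : K ≤ N) (v : Fin K → ℂ)
    (hdist : Function.Injective v)
    (hvN : ∀ k, (v k) ^ N ≠ 1 ∧ (v k) ^ N ≠ -1) :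
    IsGeneric N K
      ((Matrix.of fun i p : Fin N =>
          (Complex.exp (2 * Real.pi * Complex.I / N)) ^ ((i : ℕ) * (p : ℕ))) *
       (Matrix.of fun (p : Fin N) (k : Fin K) => (v k) ^ (p : ℕ))) :=
  stmt13_general N K v hdist hvN
end
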